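/- arXiv:2404.05982 — 2 statements merged into one kernel-verified Lean document; each statement's English description precedes it below -/
import Mathlib

section
/- Let h : ℝ^n → ℝ be a smooth convex function and let ξ : [0, ∞) → ℝ^n be a solution of the negative gradient flow ξ'(t) = −∇h(ξ(t)). Then for every τ > 0 and every point ξ* ∈ ℝ^n, one has |∇h(ξ(τ))|² ≤ |∇h(ξ*)|² + (1/τ²)|ξ* − ξ(0)|². -/
open InnerProductSpace Set

local notation "⟪" x ", " y "⟫" => @inner ℝ _ _ x y

variable {F : Type*} [NormedAddCommGroup F] [InnerProductSpace ℝ F] [CompleteSpace F]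

lemma contDiff_gradient (f : F → ℝ) (hf : ContDiff ℝ (⊤ : ℕ∞) f) : ContDiff ℝ (⊤ : ℕ∞) (gradient f) :=
  (toDual ℝ F).symm.contDiff.comp (hf.fderiv_right (by simp))

lemma grad_support (f : F → ℝ) (hf : Differentiable ℝ f) (hc : ConvexOn ℝ Set.univ f)
    (x y : F) : f x + ⟪gradient f x, y - x⟫ ≤ f y := by
  set φ : ℝ → ℝ := fun s => f (x + s • (y - x)) with hφ
  have hline : ∀ s : ℝ, HasDerivAt (fun s : ℝ => x + s • (y - x)) (y - x) s := by
    intro s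
    have h1 : HasDerivAt (fun s : ℝ => s • (y - x)) ((1:ℝ) • (y - x)) s :=
      (hasDerivAt_id s).smul_const (y - x)
    simpa [one_smul] using h1.const_add x
  have hder : ∀ s : ℝ, HasDerivAt φ ⟪gradient f (x + s • (y - x)), y - x⟫ s := by
    intro s
    have h2 := ((hf (x + s • (y - x))).hasGradientAt.hasFDerivAt).comp_hasDerivAt s (hline s)
    rw [toDual_apply_apply] at h2
    exact h2
  have hconvφ : ConvexOn ℝ Set.univ φ := by
    have := hc.comp_affineMap (AffineMap.lineMap x y : ℝ →ᵃ[ℝ] F)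
    have heq : (f ∘ (AffineMap.lineMap x y : ℝ →ᵃ[ℝ] F)) = φ := by
      funext s
      simp [φ, AffineMap.lineMap_apply, add_comm]
    rw [heq] at this
    simpa using this
  have key := hconvφ.le_slope_of_hasDerivAt (Set.mem_univ (0:ℝ)) (Set.mem_univ (1:ℝ))
    one_pos (by simpa using hder 0)
  have hslope : slope φ 0 1 = f y - f x := by
    simp [slope_def_field, φ]
  rw [hslope] at key
  simpa using by linarith [key]

lemma grad_mono (f : F → ℝ) (hf : Differentiable ℝ f) (hc : ConvexOn ℝ Set.univ f)
    (x y : F) : 0 ≤ ⟪gradient f x - gradient f y, x - y⟫ := by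
  have h1 := grad_support f hf hc x y
  have h2 := grad_support f hf hc y x
  have e1 : ⟪gradient f x - gradient f y, x - y⟫
      = - ⟪gradient f x, y - x⟫ - ⟪gradient f y, x - y⟫ := by
    rw [inner_sub_left]
    have e2 : (y - x) = -(x - y) := by abel
    rw [e2, inner_neg_right]
    ring
  rw [e1]; linarith

theorem stmt4 (n : ℕ) (h : EuclideanSpace ℝ (Fin n) → ℝ)
    (hsmooth : ContDiff ℝ (⊤ : ℕ∞) h) (hconv : ConvexOn ℝ Set.univ h)
    (ξ : ℝ → EuclideanSpace ℝ (Fin n))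
    (hflow : ∀ t, 0 ≤ t → HasDerivAt ξ (-(gradient h (ξ t))) t)
    (τ : ℝ) (hτ : 0 < τ) (ξs : EuclideanSpace ℝ (Fin n)) :
    ‖gradient h (ξ τ)‖ ^ 2 ≤ ‖gradient h ξs‖ ^ 2 + (1 / τ ^ 2) * ‖ξs - ξ 0‖ ^ 2 := by
  have hdiff : Differentiable ℝ h := hsmooth.differentiable (by simp)
  have hGd : Differentiable ℝ (gradient h) :=
    (contDiff_gradient h hsmooth).differentiable (by simp)
  set g : ℝ → EuclideanSpace ℝ (Fin n) := fun t => gradient h (ξ t) with hg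
  set a : EuclideanSpace ℝ (Fin n) := gradient h ξs with ha
  have hflow' : ∀ t : ℝ, 0 ≤ t → HasDerivAt ξ (-(g t)) t := hflow
  have hgder : ∀ t : ℝ, 0 ≤ t →
      HasDerivAt g (fderiv ℝ (gradient h) (ξ t) (-(g t))) t := fun t ht =>
    (hGd (ξ t)).hasFDerivAt.comp_hasDerivAt t (hflow' t ht)
  have hsign : ∀ t : ℝ, 0 ≤ t → ⟪fderiv ℝ (gradient h) (ξ t) (-(g t)), g t⟫ ≤ 0 := by
    intro t ht
    have h1 : Filter.Tendsto (slope g t) (nhdsWithin t {t}ᶜ)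
        (nhds (fderiv ℝ (gradient h) (ξ t) (-(g t)))) :=
      hasDerivAt_iff_tendsto_slope.mp (hgder t ht)
    have h2 : Filter.Tendsto (slope ξ t) (nhdsWithin t {t}ᶜ) (nhds (-(g t))) :=
      hasDerivAt_iff_tendsto_slope.mp (hflow' t ht)
    have h3 : Filter.Tendsto (fun s => ⟪slope g t s, slope ξ t s⟫) (nhdsWithin t {t}ᶜ)
        (nhds ⟪fderiv ℝ (gradient h) (ξ t) (-(g t)), -(g t)⟫) := h1.inner h2
    have h4 : 0 ≤ ⟪fderiv ℝ (gradient h) (ξ t) (-(g t)), -(g t)⟫ := by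
      refine ge_of_tendsto h3 ?_
      filter_upwards [self_mem_nhdsWithin] with s hs
      rw [slope_def_module, slope_def_module, real_inner_smul_left, real_inner_smul_right]
      have hm : 0 ≤ ⟪g s - g t, ξ s - ξ t⟫ := grad_mono h hdiff hconv (ξ s) (ξ t)
      nlinarith [sq_nonneg ((s - t)⁻¹), hm]
    rw [inner_neg_right] at h4; linarith
  have hcξ : ContinuousOn ξ (Icc 0 τ) := fun t ht =>
    ((hflow' t ht.1).continuousAt).continuousWithinAt
  have hcg : ContinuousOn g (Icc 0 τ) := hGd.continuous.comp_continuousOn hcξ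
  set q : ℝ → ℝ := fun t => ⟪g t, g t⟫ with hq
  have hqder : ∀ t : ℝ, 0 ≤ t → HasDerivAt q
      (⟪g t, fderiv ℝ (gradient h) (ξ t) (-(g t))⟫
        + ⟪fderiv ℝ (gradient h) (ξ t) (-(g t)), g t⟫) t := fun t ht =>
    (hgder t ht).inner ℝ (hgder t ht)
  have hqanti : AntitoneOn q (Icc 0 τ) := by
    apply antitoneOn_of_deriv_nonpos (convex_Icc 0 τ)
    · exact hcg.inner hcg
    · intro t ht
      rw [interior_Icc] at ht
      exact ((hqder t ht.1.le).differentiableAt).differentiableWithinAt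
    · intro t ht
      rw [interior_Icc] at ht
      rw [(hqder t ht.1.le).deriv]
      have hs := hsign t ht.1.le
      have hc1 : (⟪g t, fderiv ℝ (gradient h) (ξ t) (-(g t))⟫ : ℝ)
          = ⟪fderiv ℝ (gradient h) (ξ t) (-(g t)), g t⟫ := real_inner_comm _ _
      linarith
  set Qv : ℝ := ⟪g τ, g τ⟫ with hQv
  set Av : ℝ := ⟪a, a⟫ with hAv
  set w : ℝ → EuclideanSpace ℝ (Fin n) := fun t => ξ t - ξs + t • a with hw
  set u : ℝ → ℝ := fun t => h (ξ t) - ⟪a, ξ t⟫ - (h ξs - ⟪a, ξs⟫) with hu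
  set Fl : ℝ → ℝ := fun t => t^2 * (Qv - Av) + ⟪w t, w t⟫ + 2 * t * u t with hFl
  have hwder : ∀ t : ℝ, 0 ≤ t → HasDerivAt w (-(g t) + a) t := by
    intro t ht
    have h1 : HasDerivAt (fun t : ℝ => t • a) ((1:ℝ) • a) t := (hasDerivAt_id t).smul_const a
    exact ((hflow' t ht).sub_const ξs).add (by simpa [one_smul] using h1)
  have huder : ∀ t : ℝ, 0 ≤ t →
      HasDerivAt u (⟪g t, -(g t)⟫ - ⟪a, -(g t)⟫) t := by
    intro t ht
    have hh : HasDerivAt (fun t => h (ξ t)) ⟪g t, -(g t)⟫ t := by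
      have hh' := ((hdiff (ξ t)).hasGradientAt.hasFDerivAt).comp_hasDerivAt t (hflow' t ht)
      rw [toDual_apply_apply] at hh'
      exact hh'
    have ha2 : HasDerivAt (fun t => ⟪a, ξ t⟫) (⟪a, -(g t)⟫) t := by
      simpa using (hasDerivAt_const t a).inner ℝ (hflow' t ht)
    exact (hh.sub ha2).sub_const _
  have hFder : ∀ t : ℝ, 0 ≤ t → HasDerivAt Fl
      (2 * t * (Qv - Av) + (⟪w t, -(g t) + a⟫ + ⟪-(g t) + a, w t⟫)
        + (2 * u t + 2 * t * (⟪g t, -(g t)⟫ - ⟪a, -(g t)⟫))) t := by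
    intro t ht
    have h1 : HasDerivAt (fun t : ℝ => t^2 * (Qv - Av)) (2 * t * (Qv - Av)) t := by
      simpa using (hasDerivAt_pow 2 t).mul_const (Qv - Av)
    have h2 : HasDerivAt (fun t => ⟪w t, w t⟫) (⟪w t, -(g t) + a⟫ + ⟪-(g t) + a, w t⟫) t :=
      (hwder t ht).inner ℝ (hwder t ht)
    have h3 : HasDerivAt (fun t => 2 * t * u t)
        (2 * u t + 2 * t * (⟪g t, -(g t)⟫ - ⟪a, -(g t)⟫)) t := by
      have h3' := ((hasDerivAt_id t).const_mul 2).mul (huder t ht)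
      simp only [id_eq, mul_one] at h3'
      exact h3'
    exact (h1.add h2).add h3
  have hFanti : AntitoneOn Fl (Icc 0 τ) := by
    apply antitoneOn_of_deriv_nonpos (convex_Icc 0 τ)
    · have hcw : ContinuousOn w (Icc 0 τ) :=
        (hcξ.sub continuousOn_const).add ((continuous_id.smul continuous_const).continuousOn)
      have hcu : ContinuousOn u (Icc 0 τ) :=
        ((hdiff.continuous.comp_continuousOn hcξ).sub
          (continuousOn_const.inner hcξ)).sub continuousOn_const
      exact ((continuousOn_pow 2).mul continuousOn_const).add
        ((hcw.inner hcw)) |>.add (((continuousOn_const.mul continuousOn_id).mul hcu))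
    · intro t ht
      rw [interior_Icc] at ht
      exact ((hFder t ht.1.le).differentiableAt).differentiableWithinAt
    · intro t ht
      rw [interior_Icc] at ht
      rw [(hFder t ht.1.le).deriv]
      have hQle : Qv ≤ ⟪g t, g t⟫ :=
        hqanti ⟨ht.1.le, ht.2.le⟩ ⟨hτ.le, le_refl τ⟩ ht.2.le
      have h7 : h (ξ t) + ⟪g t, ξs - ξ t⟫ ≤ h ξs := grad_support h hdiff hconv (ξ t) ξs
      rw [inner_sub_right] at h7
      have hsupp : u t ≤ ⟪g t, ξ t⟫ - ⟪g t, ξs⟫ - (⟪a, ξ t⟫ - ⟪a, ξs⟫) := by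
        simp only [hu]
        linarith
      have hprod : 0 ≤ t * (⟪g t, g t⟫ - Qv) :=
        mul_nonneg ht.1.le (by linarith)
      simp only [hw, inner_add_left, inner_add_right, inner_sub_left, inner_sub_right,
        inner_neg_left, inner_neg_right, real_inner_smul_left, real_inner_smul_right]
      have c1 : (⟪ξ t, g t⟫ : ℝ) = ⟪g t, ξ t⟫ := real_inner_comm _ _
      have c2 : (⟪ξs, g t⟫ : ℝ) = ⟪g t, ξs⟫ := real_inner_comm _ _
      have c3 : (⟪ξ t, a⟫ : ℝ) = ⟪a, ξ t⟫ := real_inner_comm _ _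
      have c4 : (⟪ξs, a⟫ : ℝ) = ⟪a, ξs⟫ := real_inner_comm _ _
      have c5 : t * ⟪a, g t⟫ = t * ⟪g t, a⟫ := by rw [real_inner_comm]
      have hA : Av = ⟪a, a⟫ := hAv
      linarith [hprod, hsupp, c1, c2, c3, c4, c5, hA]
  -- endpoints
  have hF0 : Fl 0 = ‖ξs - ξ 0‖^2 := by
    have hw0 : w 0 = ξ 0 - ξs := by simp [hw]
    have he : Fl 0 = ⟪w 0, w 0⟫ := by simp [hFl]
    rw [he, hw0, real_inner_self_eq_norm_sq, norm_sub_rev]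
  have huτ : 0 ≤ u τ := by
    have h7 : h ξs + ⟪a, ξ τ - ξs⟫ ≤ h (ξ τ) := grad_support h hdiff hconv ξs (ξ τ)
    rw [inner_sub_right] at h7
    simp only [hu]
    linarith
  have hFτ : τ^2 * (Qv - Av) ≤ Fl τ := by
    have h1 : 0 ≤ ⟪w τ, w τ⟫ := real_inner_self_nonneg
    have h2 : 0 ≤ 2 * τ * u τ := by positivity
    simp only [hFl]
    linarith
  have hkey : τ^2 * (Qv - Av) ≤ ‖ξs - ξ 0‖^2 := by
    have := hFanti ⟨le_refl 0, hτ.le⟩ ⟨hτ.le, le_refl τ⟩ hτ.le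
    linarith [hF0 ▸ this, hFτ]
  have hQn : Qv = ‖g τ‖^2 := real_inner_self_eq_norm_sq _
  have hAn : Av = ‖a‖^2 := real_inner_self_eq_norm_sq _
  have hτ2 : (0:ℝ) < τ^2 := by positivity
  rw [← hQn, ← hAn]
  have h5 : Qv - Av ≤ ‖ξs - ξ 0‖^2 / τ^2 := by
    rw [le_div_iff₀ hτ2]; nlinarith [hkey]
  have h6 : (1 / τ^2) * ‖ξs - ξ 0‖^2 = ‖ξs - ξ 0‖^2 / τ^2 := by ring
  rw [h6]
  linarith
end

section
/- Let h : ℝ^n → ℝ be smooth and strictly convex with ∇h a homeomorphism onto an open set U ⊆ ℝ^n, and suppose L̂ = ∇h(K̂) for some K̂ ∈ ℝ^n. If K(t) solves the negative gradient flow K'(t) = −(∇h(K(t)) − L̂) for all t ≥ 0, then ∇h(K(t)) → L̂ as t → ∞, and consequently K(t) → K̂ as t → ∞. -/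
open Set InnerProductSpace

/-- Strict monotonicity of the gradient of a strictly convex differentiable function. -/
lemma stmt5_grad_strict_mono {n : ℕ} {h : EuclideanSpace ℝ (Fin n) → ℝ}
    (hdiff : Differentiable ℝ h) (hconv : StrictConvexOn ℝ Set.univ h)
    {x y : EuclideanSpace ℝ (Fin n)} (hxy : x ≠ y) :
    0 < ⟪gradient h x - gradient h y, x - y⟫_ℝ := by
  set c : ℝ → EuclideanSpace ℝ (Fin n) := fun t => x + t • (y - x) with hc
  have hyx : y - x ≠ 0 := sub_ne_zero.mpr (Ne.symm hxy)
  have hcderiv : ∀ t : ℝ, HasDerivAt c (y - x) t := by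
    intro t
    have := ((hasDerivAt_id t).smul_const (y - x)).const_add x
    rw [one_smul] at this
    exact this
  have hgderiv : ∀ t : ℝ, HasDerivAt (fun s => h (c s)) ⟪gradient h (c t), y - x⟫_ℝ t := by
    intro t
    have := ((hdiff (c t)).hasGradientAt.hasFDerivAt).comp_hasDerivAt t (hcderiv t)
    refine this.congr_deriv ?_
    simp only [InnerProductSpace.toDual_apply_apply]
  have hg : StrictConvexOn ℝ Set.univ (fun s => h (c s)) := by
    refine ⟨convex_univ, ?_⟩
    intro a _ b _ hab t1 t2 ht1 ht2 hsum
    have hne : c a ≠ c b := by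
      simp only [hc]
      intro hcc
      apply hab
      have h1 := sub_eq_zero.mpr (add_left_cancel hcc)
      rw [← sub_smul] at h1
      rcases smul_eq_zero.mp h1 with h1 | h2
      · exact sub_eq_zero.mp h1
      · exact absurd h2 hyx
    have hco : c (t1 • a + t2 • b) = t1 • c a + t2 • c b := by
      simp only [hc, smul_eq_mul]
      match_scalars <;> linarith
    have key := hconv.2 (Set.mem_univ (c a)) (Set.mem_univ (c b)) hne ht1 ht2 hsum
    rw [← hco] at key
    simpa using key
  have h0 : (fun s => h (c s)) 0 = h x := by simp [hc]
  have h01 : c 1 = y := by simp [hc]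
  have lt1 : ⟪gradient h (c 0), y - x⟫_ℝ < slope (fun s => h (c s)) 0 1 :=
    hg.lt_slope_of_hasDerivAt (Set.mem_univ 0) (Set.mem_univ 1) one_pos (hgderiv 0)
  have lt2 : slope (fun s => h (c s)) 0 1 < ⟪gradient h (c 1), y - x⟫_ℝ :=
    hg.slope_lt_of_hasDerivAt (Set.mem_univ 0) (Set.mem_univ 1) one_pos (hgderiv 1)
  have hc0 : c 0 = x := by simp [hc]
  rw [hc0] at lt1
  rw [h01] at lt2
  have : ⟪gradient h x, y - x⟫_ℝ < ⟪gradient h y, y - x⟫_ℝ := lt1.trans lt2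
  have h2 : 0 < ⟪gradient h y - gradient h x, y - x⟫_ℝ := by
    rw [inner_sub_left]; linarith
  have h3 : x - y = -(y - x) := by abel
  rw [show gradient h x - gradient h y = -(gradient h y - gradient h x) by abel, h3,
    inner_neg_neg]
  exact h2

set_option maxHeartbeats 1000000 in
theorem stmt5 (n : ℕ) (h : EuclideanSpace ℝ (Fin n) → ℝ)
    (hsmooth : ContDiff ℝ (⊤ : ℕ∞) h) (hconv : StrictConvexOn ℝ Set.univ h)
    (U : Set (EuclideanSpace ℝ (Fin n))) (hU : IsOpen U)
    (e : EuclideanSpace ℝ (Fin n) ≃ₜ U)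
    (he : ∀ x, (e x : EuclideanSpace ℝ (Fin n)) = gradient h x)
    (Khat Lhat : EuclideanSpace ℝ (Fin n)) (hL : Lhat = gradient h Khat)
    (K : ℝ → EuclideanSpace ℝ (Fin n))
    (hflow : ∀ t, 0 ≤ t → HasDerivAt K (-(gradient h (K t) - Lhat)) t) :
    Filter.Tendsto (fun t => gradient h (K t)) Filter.atTop (nhds Lhat) ∧
    Filter.Tendsto K Filter.atTop (nhds Khat) := by
  classical
  have hdiff : Differentiable ℝ h := hsmooth.differentiable (by simp)
  set G : EuclideanSpace ℝ (Fin n) → EuclideanSpace ℝ (Fin n) := fun x => gradient h x with hG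
  have hGcont : Continuous G := by
    have : Continuous (fderiv ℝ h) := hsmooth.continuous_fderiv (by simp)
    exact (InnerProductSpace.toDual ℝ (EuclideanSpace ℝ (Fin n))).symm.continuous.comp this
  -- positivity of the inner product along the flow
  have mono : ∀ x, x ≠ Khat → 0 < ⟪G x - Lhat, x - Khat⟫_ℝ := by
    intro x hx
    rw [hL]
    exact stmt5_grad_strict_mono hdiff hconv hx
  have nonneg : ∀ x, 0 ≤ ⟪G x - Lhat, x - Khat⟫_ℝ := by
    intro x
    by_cases hx : x = Khat
    · simp [hx]
    · exact (mono x hx).le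
  -- the Lyapunov function
  set V : ℝ → ℝ := fun t => ⟪K t - Khat, K t - Khat⟫_ℝ with hVdef
  have hV' : ∀ t, 0 ≤ t →
      HasDerivAt V (-2 * ⟪G (K t) - Lhat, K t - Khat⟫_ℝ) t := by
    intro t ht
    have hK : HasDerivAt (fun s => K s - Khat) (-(G (K t) - Lhat)) t :=
      (hflow t ht).sub_const Khat
    have := HasDerivAt.inner ℝ hK hK
    refine this.congr_deriv ?_
    rw [inner_neg_left, inner_neg_right, real_inner_comm (K t - Khat)]
    ring
  have hVnonneg : ∀ t, 0 ≤ V t := fun t => real_inner_self_nonneg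
  have hVanti : AntitoneOn V (Set.Ici (0:ℝ)) := by
    apply antitoneOn_of_deriv_nonpos (convex_Ici 0)
    · intro t ht
      exact (hV' t ht).continuousAt.continuousWithinAt
    · intro t ht
      rw [interior_Ici] at ht
      exact (hV' t ht.le).differentiableAt.differentiableWithinAt
    · intro t ht
      rw [interior_Ici] at ht
      rw [(hV' t (le_of_lt ht)).deriv]
      have := nonneg (K t)
      linarith
  -- the key claim : the trajectory eventually enters any ε-ball and stays there
  have key : ∀ ε : ℝ, 0 < ε → ∃ t0 : ℝ, 0 ≤ t0 ∧ ∀ t, t0 ≤ t → ‖K t - Khat‖ < ε := by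
    intro ε hε
    -- first find a single time where we are inside
    have hexists : ∃ t0 : ℝ, 0 ≤ t0 ∧ ‖K t0 - Khat‖ < ε := by
      by_contra hcon
      push_neg at hcon
      have hbig : ∀ t : ℝ, 0 ≤ t → ε ≤ ‖K t - Khat‖ := hcon
      set R : ℝ := ‖K 0 - Khat‖ with hR
      have hbd : ∀ t : ℝ, 0 ≤ t → ‖K t - Khat‖ ≤ R := by
        intro t ht
        have h1 := hVanti (Set.self_mem_Ici) (Set.mem_Ici.mpr ht) ht
        rw [hVdef] at h1
        simp only [real_inner_self_eq_norm_sq] at h1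
        exact le_of_pow_le_pow_left₀ two_ne_zero (norm_nonneg _) h1
      set S : Set (EuclideanSpace ℝ (Fin n)) :=
        {x | ε ≤ ‖x - Khat‖ ∧ ‖x - Khat‖ ≤ R} with hS
      have hScompact : IsCompact S := by
        have h1 : S = Metric.closedBall Khat R ∩ {x | ε ≤ ‖x - Khat‖} := by
          ext x
          simp [hS, Metric.mem_closedBall, dist_eq_norm, and_comm]
        rw [h1]
        apply (isCompact_closedBall Khat R).inter_right
        have : {x : EuclideanSpace ℝ (Fin n) | ε ≤ ‖x - Khat‖} =
            (fun x => ‖x - Khat‖) ⁻¹' (Set.Ici ε) := rfl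
        rw [this]
        exact IsClosed.preimage (by continuity) isClosed_Ici
      have hSne : S.Nonempty := ⟨K 0, hbig 0 le_rfl, le_rfl⟩
      have hfc : ContinuousOn (fun x => ⟪G x - Lhat, x - Khat⟫_ℝ) S := by
        apply Continuous.continuousOn
        exact (hGcont.sub continuous_const).inner (continuous_id.sub continuous_const)
      obtain ⟨x0, hx0S, hx0min⟩ := hScompact.exists_isMinOn hSne hfc
      set m : ℝ := ⟪G x0 - Lhat, x0 - Khat⟫_ℝ with hm
      have hmpos : 0 < m := by
        apply mono
        intro hx0
        have := hx0S.1
        rw [hx0, sub_self, norm_zero] at this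
        linarith
      have hmem : ∀ t : ℝ, 0 ≤ t → K t ∈ S := fun t ht => ⟨hbig t ht, hbd t ht⟩
      have hlow : ∀ t : ℝ, 0 ≤ t → m ≤ ⟪G (K t) - Lhat, K t - Khat⟫_ℝ :=
        fun t ht => hx0min (hmem t ht)
      -- W t = V t + 2 m t is antitone on [0, ∞)
      have hWd : ∀ t : ℝ, 0 ≤ t → HasDerivAt (fun t => V t + 2 * m * t)
          (-2 * ⟪G (K t) - Lhat, K t - Khat⟫_ℝ + 2 * m) t := by
        intro t ht
        have := (hV' t ht).add (((hasDerivAt_id t).const_mul (2*m)))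
        exact this.congr_deriv (by ring)
      have hWanti : AntitoneOn (fun t => V t + 2 * m * t) (Set.Ici (0:ℝ)) := by
        apply antitoneOn_of_deriv_nonpos (convex_Ici 0)
        · intro t ht
          exact (hWd t ht).continuousAt.continuousWithinAt
        · intro t ht
          rw [interior_Ici] at ht
          exact (hWd t ht.le).differentiableAt.differentiableWithinAt
        · intro t ht
          rw [interior_Ici] at ht
          rw [(hWd t ht.le).deriv]
          have := hlow t ht.le
          linarith
      have hV0 := hVnonneg 0
      have h2m : (0:ℝ) < 2 * m := by linarith
      have hbound : ∀ t : ℝ, 0 ≤ t → 2 * m * t ≤ V 0 := by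
        intro t ht
        have h1 := hWanti Set.self_mem_Ici (Set.mem_Ici.mpr ht) ht
        simp only at h1
        have h2 := hVnonneg t
        linarith
      have hTnn : (0:ℝ) ≤ (V 0 + 1) / (2 * m) := div_nonneg (by linarith) h2m.le
      have hfin := hbound ((V 0 + 1) / (2 * m)) hTnn
      have hcalc : 2 * m * ((V 0 + 1) / (2 * m)) = V 0 + 1 := by
        field_simp
      rw [hcalc] at hfin
      linarith
    obtain ⟨t0, ht0, ht0lt⟩ := hexists
    refine ⟨t0, ht0, fun t ht => ?_⟩
    have h1 := hVanti (Set.mem_Ici.mpr ht0) (Set.mem_Ici.mpr (ht0.trans ht)) ht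
    rw [hVdef] at h1
    simp only [real_inner_self_eq_norm_sq] at h1
    have h2 : ‖K t0 - Khat‖ ^ 2 < ε ^ 2 := by
      have := norm_nonneg (K t0 - Khat)
      nlinarith
    exact lt_of_pow_lt_pow_left₀ 2 hε.le (lt_of_le_of_lt h1 h2)
  have hKconv : Filter.Tendsto K Filter.atTop (nhds Khat) := by
    rw [Metric.tendsto_atTop]
    intro ε hε
    obtain ⟨t0, ht0, hball⟩ := key ε hε
    exact ⟨t0, fun t ht => by rw [dist_eq_norm]; exact hball t ht⟩
  refine ⟨?_, hKconv⟩
  have : Filter.Tendsto (fun t => G (K t)) Filter.atTop (nhds (G Khat)) :=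
    (hGcont.continuousAt.tendsto).comp hKconv
  rw [hL]
  exact this
end
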